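/- Let a, b, c ∈ ℝ² be non-collinear points such that the interior angle of triangle abc at vertex a is obtuse, i.e., ∠cab > π/2. Then there exists a strip containing {a, b, c} whose width is strictly less than dist(c, line(a,b)). (In other words, the strip having a and b on one boundary line and c on the other boundary line is not a minimum-width strip containing the three points.) -/

import Mathlib

open Set Metric

noncomputable section

/-- Points of the plane. -/
abbrev Pt : Type := EuclideanSpace ℝ (Fin 2)

/-- The real inner product of two vectors of the plane. -/
def iprod (p q : Pt) : ℝ := inner ℝ p q

/-- The ray emanating from `p` in direction `u`. -/
def ray (p u : Pt) : Set Pt := {q | ∃ t : ℝ, 0 ≤ t ∧ q = p + t • u}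

/-- The line through `p` with direction `u`. -/
def lineThrough (p u : Pt) : Set Pt := {q | ∃ t : ℝ, q = p + t • u}

/-- A V-shape: two vertices `x ≠ y` and two nonzero direction vectors `u₁, u₂` lying in
opposite closed half-planes determined by the direction `y - x` (witnessed by a unit
normal `n` of `y - x` with `⟪u₁, n⟫ ≥ 0 ≥ ⟪u₂, n⟫`). -/
structure VShape where
  x : Pt
  y : Pt
  u₁ : Pt
  u₂ : Pt
  n : Pt
  hxy : x ≠ y
  hu₁ : u₁ ≠ 0
  hu₂ : u₂ ≠ 0
  hn : ‖n‖ = 1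
  hperp : iprod (y - x) n = 0
  hside₁ : 0 ≤ iprod u₁ n
  hside₂ : iprod u₂ n ≤ 0

namespace VShape

/-- Direction of the `i`-th arm (`i = 0, 1` standing for `1, 2`). -/
def dir (V : VShape) : Fin 2 → Pt := ![V.u₁, V.u₂]

/-- The `i`-th arm: convex hull of the two parallel rays `Xᵢ` (from `x`) and `Yᵢ` (from `y`). -/
def arm (V : VShape) (i : Fin 2) : Set Pt :=
  convexHull ℝ (ray V.x (V.dir i) ∪ ray V.y (V.dir i))

/-- The V-shape as a subset of the plane: the union of its two arms. -/
def carrier (V : VShape) : Set Pt := V.arm 0 ∪ V.arm 1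

/-- The `i`-th strip: the closed region between the parallel lines `x + ℝ•uᵢ` and `y + ℝ•uᵢ`. -/
def strip (V : VShape) (i : Fin 2) : Set Pt :=
  convexHull ℝ (lineThrough V.x (V.dir i) ∪ lineThrough V.y (V.dir i))

/-- Width of the `i`-th arm: the distance between the two parallel boundary lines. -/
def armWidth (V : VShape) (i : Fin 2) : ℝ :=
  Metric.infDist V.x (lineThrough V.y (V.dir i))

/-- Width of a V-shape: the larger of the two arm widths. -/
def width (V : VShape) : ℝ := max (V.armWidth 0) (V.armWidth 1)

/-- A V-shape covers a set `P` if `P` is contained in it. -/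
def covers (V : VShape) (P : Set Pt) : Prop := P ⊆ V.carrier

end VShape

/-- `S` is a closed strip of width `w`: the closed region between two parallel lines at
distance `w`, described by a unit normal vector `v` and an offset `c`. -/
def IsStrip (S : Set Pt) (w : ℝ) : Prop :=
  0 ≤ w ∧ ∃ (v : Pt) (c : ℝ), ‖v‖ = 1 ∧ S = {p | c ≤ iprod p v ∧ iprod p v ≤ c + w}

/-! The strip bounded by `line(b, c)` and its parallel through `a` has width
`h_a = dist(a, line(b, c))`. The products `h_a * |bc|` and `h_c * |ab|` both equal twice the
area of the triangle (their squares are the Gram determinant `gram`), and `|bc| > |ab|` since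
`bc` lies opposite the obtuse angle; hence `h_a < h_c`. -/

open InnerProductGeometry
open scoped RealInnerProductSpace

section InnerProductSpace

variable {V : Type*} [NormedAddCommGroup V] [InnerProductSpace ℝ V]

def perpPart (w u : V) : V := w - (⟪w, u⟫ / ⟪u, u⟫) • u

def gram (x y : V) : ℝ := ‖x‖ ^ 2 * ‖y‖ ^ 2 - ⟪x, y⟫ ^ 2

lemma inner_perpPart_right (w u : V) : ⟪perpPart w u, u⟫ = 0 := by
  by_cases hu : u = 0
  · simp [hu]
  rw [perpPart, inner_sub_left, real_inner_smul_left,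
    div_mul_cancel₀ _ (inner_self_ne_zero.2 hu), sub_self]

lemma norm_perpPart_le_norm_sub_smul (w u : V) (t : ℝ) : ‖perpPart w u‖ ≤ ‖w - t • u‖ := by
  have hsplit : w - t • u = perpPart w u + (⟪w, u⟫ / ⟪u, u⟫ - t) • u := by
    rw [perpPart, sub_smul]; abel
  have hpyth := norm_add_sq_eq_norm_sq_add_norm_sq_real
    (by rw [real_inner_smul_right, inner_perpPart_right, mul_zero] :
      ⟪perpPart w u, (⟪w, u⟫ / ⟪u, u⟫ - t) • u⟫ = 0)
  rw [hsplit, mul_self_le_mul_self_iff (norm_nonneg _) (norm_nonneg _), hpyth]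
  exact le_add_of_nonneg_right (mul_self_nonneg _)

lemma norm_perpPart_sq_mul_norm_sq (w u : V) : ‖perpPart w u‖ ^ 2 * ‖u‖ ^ 2 = gram w u := by
  by_cases hu : u = 0
  · simp [hu, gram]
  have hself : ‖perpPart w u‖ ^ 2 = ‖w‖ ^ 2 - ⟪w, u⟫ ^ 2 / ⟪u, u⟫ := by
    rw [← real_inner_self_eq_norm_sq]
    nth_rewrite 2 [perpPart]
    rw [inner_sub_right, real_inner_smul_right, inner_perpPart_right, perpPart, inner_sub_left,
      real_inner_smul_left, real_inner_self_eq_norm_sq, real_inner_comm u w]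
    ring
  rw [hself, gram, ← real_inner_self_eq_norm_sq u]
  field_simp

lemma gram_sub_sub_rotate (a b c : V) : gram (a - b) (c - b) = gram (c - a) (b - a) := by
  have hrotate (x y : V) : gram x y = gram (y - x) (-x) := by
    rw [gram, gram, norm_neg, inner_neg_right, norm_sub_sq_real, inner_sub_left,
      real_inner_self_eq_norm_sq, real_inner_comm x y]
    ring
  rw [hrotate, sub_sub_sub_cancel_right, neg_sub]

lemma perpPart_ne_zero_of_not_collinear {a b c : V} (h : ¬ Collinear ℝ ({a, b, c} : Set V)) :
    perpPart (a - b) (c - b) ≠ 0 := by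
  intro h0
  apply h
  apply collinear_insert_of_mem_affineSpan_pair
  have ha : AffineMap.lineMap b c (⟪a - b, c - b⟫ / ⟪c - b, c - b⟫) = a := by
    rw [perpPart, sub_eq_zero] at h0
    rw [AffineMap.lineMap_apply, vsub_eq_sub, vadd_eq_add, ← h0, sub_add_cancel]
  exact ha ▸ AffineMap.lineMap_mem_affineSpan_pair _ b c

lemma inner_neg_of_pi_div_two_lt_angle {x y : V} (h : Real.pi / 2 < angle x y) :
    ⟪x, y⟫ < 0 := by
  have hx : x ≠ 0 := by rintro rfl; simp at h
  have hy : y ≠ 0 := by rintro rfl; simp at h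
  have hcos : Real.cos (angle x y) < 0 :=
    Real.cos_neg_of_pi_div_two_lt_of_lt h (by linarith [angle_le_pi x y, Real.pi_pos])
  rw [← cos_angle_mul_norm_mul_norm]
  exact mul_neg_of_neg_of_pos hcos (by positivity)

lemma norm_lt_norm_sub_of_pi_div_two_lt_angle {x y : V} (h : Real.pi / 2 < angle x y) :
    ‖y‖ < ‖x - y‖ := by
  have hxy := inner_neg_of_pi_div_two_lt_angle h
  refine lt_of_pow_lt_pow_left₀ 2 (norm_nonneg _) ?_
  rw [norm_sub_sq_real]
  nlinarith [sq_nonneg ‖x‖]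

end InnerProductSpace

lemma infDist_lineThrough (p q u : Pt) :
    infDist p (lineThrough q u) = ‖perpPart (p - q) u‖ := by
  have hne : (lineThrough q u).Nonempty := ⟨q, 0, by simp⟩
  refine le_antisymm ?_ ((le_infDist hne).2 ?_)
  · refine (infDist_le_dist_of_mem
      (show q + (⟪p - q, u⟫ / ⟪u, u⟫) • u ∈ lineThrough q u from ⟨_, rfl⟩)).trans_eq ?_
    rw [dist_eq_norm, perpPart, sub_add_eq_sub_sub]
  · rintro _ ⟨t, rfl⟩
    rw [dist_eq_norm, ← sub_sub]
    exact norm_perpPart_le_norm_sub_smul _ _ t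

lemma exists_isStrip_of_perpPart_ne_zero {p q u : Pt} (h : perpPart (p - q) u ≠ 0) :
    ∃ S, IsStrip S ‖perpPart (p - q) u‖ ∧ p ∈ S ∧ lineThrough q u ⊆ S := by
  set d := perpPart (p - q) u
  have hd : 0 < ‖d‖ := norm_pos_iff.2 h
  set v : Pt := ‖d‖⁻¹ • d
  have hv : ‖v‖ = 1 := by rw [norm_smul, norm_inv, norm_norm, inv_mul_cancel₀ hd.ne']
  have huv : iprod u v = 0 := by
    rw [iprod, real_inner_smul_right, real_inner_comm, inner_perpPart_right, mul_zero]
  have hline : ∀ t : ℝ, iprod (q + t • u) v = iprod q v := by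
    intro t
    rw [iprod, inner_add_left, real_inner_smul_left, ← iprod, ← iprod, huv, mul_zero, add_zero]
  have hp : iprod p v = iprod q v + ‖d‖ := by
    have hpq : p = q + (⟪p - q, u⟫ / ⟪u, u⟫) • u + d := by simp [d, perpPart]
    rw [hpq, iprod, inner_add_left, ← iprod, hline, real_inner_smul_right,
      real_inner_self_eq_norm_sq]
    field_simp
  refine ⟨{x | iprod q v ≤ iprod x v ∧ iprod x v ≤ iprod q v + ‖d‖},
    ⟨norm_nonneg d, v, iprod q v, hv, rfl⟩, ⟨by linarith, hp.le⟩, ?_⟩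
  rintro _ ⟨t, rfl⟩
  exact ⟨(hline t).ge, by linarith [hline t]⟩

/-- If the angle of a triangle `abc` at `a` is obtuse, then some strip
containing the three points is strictly narrower than the height from `c`, i.e. than
`dist(c, line(a,b))`. -/
theorem statement12 (a b c : Pt) (h : ¬ Collinear ℝ ({a, b, c} : Set Pt))
    (hobtuse : Real.pi / 2 < EuclideanGeometry.angle c a b) :
    ∃ (S : Set Pt) (w : ℝ), IsStrip S w ∧ ({a, b, c} : Set Pt) ⊆ S ∧
      w < Metric.infDist c (lineThrough a (b - a)) := by
  have hperp := perpPart_ne_zero_of_not_collinear h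
  obtain ⟨S, hS, haS, hline⟩ := exists_isStrip_of_perpPart_ne_zero hperp
  refine ⟨S, _, hS, ?_, ?_⟩
  · rintro _ (rfl | rfl | rfl)
    · exact haS
    · exact hline ⟨0, by simp⟩
    · exact hline ⟨1, by simp⟩
  have hbase : ‖b - a‖ < ‖c - b‖ := by
    simpa using norm_lt_norm_sub_of_pi_div_two_lt_angle hobtuse
  have harea := gram_sub_sub_rotate a b c
  rw [← norm_perpPart_sq_mul_norm_sq, ← norm_perpPart_sq_mul_norm_sq] at harea
  have hA : 0 < ‖perpPart (a - b) (c - b)‖ := norm_pos_iff.2 hperp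
  have hsq : ‖perpPart (a - b) (c - b)‖ ^ 2 * ‖b - a‖ ^ 2 <
      ‖perpPart (c - a) (b - a)‖ ^ 2 * ‖b - a‖ ^ 2 :=
    calc _ < ‖perpPart (a - b) (c - b)‖ ^ 2 * ‖c - b‖ ^ 2 := by gcongr
      _ = _ := harea
  rw [infDist_lineThrough]
  exact lt_of_pow_lt_pow_left₀ 2 (norm_nonneg _) (lt_of_mul_lt_mul_right hsq (sq_nonneg _))
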